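/- arXiv:2302.12867 — 4 statements merged into one kernel-verified Lean document; each statement's English description precedes it below -/
import Mathlib

section
/- Decryption correctness of Leonardi–Ruiz-Lopez encryption: Let G, H, K be groups, φ : G →* H and ψ : H →* K group homomorphisms, m and ℓ natural numbers, g : Fin m → G, h : Fin m → H with ψ(h i) = 1 for all i, τ ∈ H with ψ(τ) ≠ 1, β ∈ {0,1}, and w : Fin ℓ → Fin m a word. Set g* = ∏_{j<ℓ} g(w j) and h* = (∏_{j<ℓ} φ(g(w j))·h(w j))·τ^β (ordered products). Then ψ(φ(g*))⁻¹·ψ(h*) = ψ(τ)^β; in particular, ψ(φ(g*))⁻¹·ψ(h*) = 1 if and only if β = 0. -/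
/-- Decryption correctness of Leonardi–Ruiz-Lopez encryption. -/
theorem stmt_0 {G H K : Type*} [Group G] [Group H] [Group K]
    (φ : G →* H) (ψ : H →* K) (m ℓ : ℕ)
    (g : Fin m → G) (h : Fin m → H) (hker : ∀ i, ψ (h i) = 1)
    (τ : H) (hτ : ψ τ ≠ 1) (β : ℕ) (hβ : β = 0 ∨ β = 1)
    (w : Fin ℓ → Fin m) :
    (ψ (φ ((List.ofFn fun j => g (w j)).prod)))⁻¹ *
        ψ ((List.ofFn fun j => φ (g (w j)) * h (w j)).prod * τ ^ β) = ψ τ ^ β ∧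
    ((ψ (φ ((List.ofFn fun j => g (w j)).prod)))⁻¹ *
        ψ ((List.ofFn fun j => φ (g (w j)) * h (w j)).prod * τ ^ β) = 1 ↔ β = 0) := by
  have key : ψ ((List.ofFn fun j => φ (g (w j)) * h (w j)).prod)
      = ψ (φ ((List.ofFn fun j => g (w j)).prod)) := by
    simp [← List.prod_hom _ ψ, ← List.prod_hom _ φ, List.map_ofFn, Function.comp,
      hker]
    have hf : (⇑ψ ∘ fun j => φ (g (w j)) * h (w j)) = (⇑ψ ∘ ⇑φ ∘ fun j => g (w j)) := by
      funext j; simp [hker]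
    rw [hf]
  have main : (ψ (φ ((List.ofFn fun j => g (w j)).prod)))⁻¹ *
      ψ ((List.ofFn fun j => φ (g (w j)) * h (w j)).prod * τ ^ β) = ψ τ ^ β := by
    rw [map_mul, key, ← mul_assoc, inv_mul_cancel, one_mul, map_pow]
  refine ⟨main, ?_⟩
  rw [main]
  rcases hβ with rfl | rfl <;> simp [hτ]
end

section
/- Key identity in the reduction of LHN-PKE to eDLP and membership: Let G and H be commutative groups, φ : G →* H a group homomorphism, g : Fin m → G with each g(i) of finite order n_i, h : Fin m → H, τ ∈ H, β a natural number, and r, s : Fin m → ℤ with n_i ∣ (r i − s i) for all i. Set ℓ_i = φ(g i)·h i, g* = ∏_i (g i)^{r i}, h* = φ(g*)·(∏_i (h i)^{r i})·τ^β, and let M be the subgroup of H generated by the elements ℓ_i^{n_i} for i ∈ Fin m. Then (∏_i ℓ_i^{s i})⁻¹·h*·τ^{−β} ∈ M. -/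
/-- Key identity in the reduction of LHN-PKE to eDLP and membership. -/
theorem stmt_8 {G H : Type*} [CommGroup G] [CommGroup H] (φ : G →* H)
    {m : ℕ} (g : Fin m → G) (hg : ∀ i, IsOfFinOrder (g i))
    (h : Fin m → H) (τ : H) (β : ℕ) (r s : Fin m → ℤ)
    (hrs : ∀ i, (orderOf (g i) : ℤ) ∣ (r i - s i)) :
    (∏ i, (φ (g i) * h i) ^ s i)⁻¹ *
        (φ (∏ i, g i ^ r i) * (∏ i, h i ^ r i) * τ ^ β) * τ ^ (-(β : ℤ)) ∈
      Subgroup.closure {x : H | ∃ i, x = (φ (g i) * h i) ^ orderOf (g i)} := by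
  have key : (∏ i, (φ (g i) * h i) ^ s i)⁻¹ *
        (φ (∏ i, g i ^ r i) * (∏ i, h i ^ r i) * τ ^ β) * τ ^ (-(β : ℤ)) =
      ∏ i, (φ (g i) * h i) ^ (r i - s i) := by
    simp only [map_prod, map_zpow, mul_zpow, zpow_sub, zpow_neg, zpow_natCast,
      ← Finset.prod_inv_distrib, ← Finset.prod_mul_distrib, ← Finset.prod_div_distrib]
    rw [mul_assoc, mul_inv_cancel_right, ← Finset.prod_mul_distrib]
    simp [div_eq_mul_inv, mul_comm, mul_left_comm]
  rw [key]
  apply Subgroup.prod_mem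
  intro i _
  obtain ⟨k, hk⟩ := hrs i
  rw [hk, zpow_mul, zpow_natCast]
  exact Subgroup.zpow_mem _ (Subgroup.subset_closure (show _ ∈ {x : H | ∃ i, x = (φ (g i) * h i) ^ orderOf (g i)} from ⟨i, rfl⟩)) k
end

section
/- Recovering the bit from membership: Let G and H be commutative groups, φ : G →* H a group homomorphism, g : Fin m → G with each g(i) of finite order n_i, h : Fin m → H, τ ∈ H, β ∈ {0,1}, and r, s : Fin m → ℤ with n_i ∣ (r i − s i) for all i. Set ℓ_i = φ(g i)·h i, g* = ∏_i (g i)^{r i}, h* = φ(g*)·(∏_i (h i)^{r i})·τ^β, and let M be the subgroup of H generated by the elements ℓ_i^{n_i} for i ∈ Fin m. If τ ∉ M, then (∏_i ℓ_i^{s i})⁻¹·h* ∈ M if and only if β = 0. -/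
/-- Recovering the bit from membership. -/
theorem stmt_9 {G H : Type*} [CommGroup G] [CommGroup H] (φ : G →* H)
    {m : ℕ} (g : Fin m → G) (hg : ∀ i, IsOfFinOrder (g i))
    (h : Fin m → H) (τ : H) (β : ℕ) (hβ : β = 0 ∨ β = 1) (r s : Fin m → ℤ)
    (hrs : ∀ i, (orderOf (g i) : ℤ) ∣ (r i - s i))
    (hτ : τ ∉ Subgroup.closure {x : H | ∃ i, x = (φ (g i) * h i) ^ orderOf (g i)}) :
    (∏ i, (φ (g i) * h i) ^ s i)⁻¹ *
        (φ (∏ i, g i ^ r i) * (∏ i, h i ^ r i) * τ ^ β) ∈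
      Subgroup.closure {x : H | ∃ i, x = (φ (g i) * h i) ^ orderOf (g i)} ↔ β = 0 := by
  set M := Subgroup.closure {x : H | ∃ i, x = (φ (g i) * h i) ^ orderOf (g i)} with hM
  set L : Fin m → H := fun i => φ (g i) * h i with hL
  have key : ∀ i, L i ^ (r i - s i) ∈ M := by
    intro i
    obtain ⟨c, hc⟩ := hrs i
    rw [hc, zpow_mul, zpow_natCast]
    have hx : L i ^ orderOf (g i) ∈
        {x : H | ∃ j, x = (φ (g j) * h j) ^ orderOf (g j)} := ⟨i, rfl⟩
    exact Subgroup.zpow_mem _ (Subgroup.subset_closure hx) c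
  have hX : φ (∏ i, g i ^ r i) * (∏ i, h i ^ r i) = ∏ i, L i ^ r i := by
    rw [map_prod, ← Finset.prod_mul_distrib]
    exact Fintype.prod_congr _ _ fun i => by rw [map_zpow, hL, mul_zpow]
  have hmain : (∏ i, L i ^ s i)⁻¹ * (∏ i, L i ^ r i) = ∏ i, L i ^ (r i - s i) := by
    rw [inv_mul_eq_iff_eq_mul, ← Finset.prod_mul_distrib]
    refine Fintype.prod_congr _ _ fun i => ?_
    rw [← zpow_add]
    congr 1
    ring
  have hP : (∏ i, L i ^ s i)⁻¹ * (∏ i, L i ^ r i) ∈ M := by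
    rw [hmain]; exact Subgroup.prod_mem M fun i _ => key i
  rw [hX, ← mul_assoc, Subgroup.mul_mem_cancel_left M hP]
  constructor
  · intro hmem
    rcases hβ with h0 | h1
    · exact h0
    · exact absurd (by simpa [h1] using hmem) hτ
  · intro h0
    simpa [h0] using M.one_mem
end

section
/- Existence and uniqueness of polycyclic normal forms along the derived series: Let G be a finite solvable group with derived series G = G^{(1)} ⊇ G^{(2)} ⊇ ⋯ ⊇ G^{(s+1)} = 1, where G^{(i+1)} = [G^{(i)}, G^{(i)}]. Suppose that for each i ∈ {1, …, s} we are given elements g_{i,1}, …, g_{i,m_i} ∈ G^{(i)} whose images in the abelian quotient G^{(i)}/G^{(i+1)} realize G^{(i)}/G^{(i+1)} as the internal direct sum of the cyclic subgroups they generate, and let o_{i,j} denote the order of the image of g_{i,j} in G^{(i)}/G^{(i+1)}. Then every g ∈ G can be written as g = ∏_{i=1}^{s} ∏_{j=1}^{m_i} g_{i,j}^{δ_{i,j}}, the product taken in lexicographically increasing order of (i, j), for a unique family of natural numbers (δ_{i,j}) with 0 ≤ δ_{i,j} < o_{i,j} for all i, j. -/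
/-!
Modulo `G^(i+1)`, an element `x` of `G^(i)` is determined by its image in the abelian quotient,
where it has a unique normal form in the images of the `g_{i,j}`; so there is a unique admissible
exponent vector `e` with `(∏ⱼ g_{i,j}^{e_j})⁻¹ * x ∈ G^(i+1)`. Along any descending chain of
subgroups ending in `⊥` with such a unique choice at every step, normal forms exist and are unique:
peel off the first factor and recurse on the remaining element of the next subgroup.
-/

theorem CommGroup.existsUnique_pow_lt_orderOf_eq_prod {A : Type*} [CommGroup A] {m : ℕ}
    {a : Fin m → A} (ha : ∀ j, IsOfFinOrder (a j))
    (hbij : Function.Bijective fun f : (∀ j, Subgroup.zpowers (a j)) => ∏ j, (f j : A))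
    (b : A) : ∃! ε : Fin m → ℕ, (∀ j, ε j < orderOf (a j)) ∧ b = ∏ j, a j ^ ε j := by
  classical
  obtain ⟨f, rfl⟩ := hbij.2 b
  have hf : ∀ j, ∃ n < orderOf (a j), a j ^ n = f j := fun j => by
    simpa using (ha j).mem_zpowers_iff_mem_range_orderOf.mp (f j).2
  choose n hn_lt hn using hf
  refine ⟨n, ⟨hn_lt, by simp only [hn]⟩, fun ε ⟨hε_lt, hε⟩ => funext fun j => ?_⟩
  have hεf : (fun j => ⟨a j ^ ε j, pow_mem (Subgroup.mem_zpowers _) _⟩) = f :=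
    hbij.1 (by simpa using hε.symm)
  exact pow_injOn_Iio_orderOf (hε_lt j) (hn_lt j)
    ((congrArg Subtype.val (congrFun hεf j)).trans (hn j).symm)

theorem Abelianization.of_eq_one_iff_mem_commutator {G : Type*} [Group G] {H : Subgroup G}
    (z : H) : Abelianization.of z = 1 ↔ (z : G) ∈ ⁅H, H⁆ := by
  rw [← MonoidHom.mem_ker, Abelianization.ker_of, ← H.map_subtype_commutator]
  exact (Subgroup.mem_map_iff_mem H.subtype_injective).symm

theorem Subgroup.existsUnique_pow_lt_orderOf_inv_mul_mem_commutator {G : Type*} [Group G]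
    (H : Subgroup G) {m : ℕ} {g : Fin m → H}
    (hg : ∀ j, IsOfFinOrder (Abelianization.of (g j)))
    (hbij : Function.Bijective fun f : (∀ j, Subgroup.zpowers (Abelianization.of (g j))) =>
      ∏ j, (f j : Abelianization H))
    {x : G} (hx : x ∈ H) :
    ∃! e : Fin m → ℕ, (∀ j, e j < orderOf (Abelianization.of (g j))) ∧
      (List.ofFn fun j => (g j : G) ^ e j).prod⁻¹ * x ∈ ⁅H, H⁆ := by
  have hcoset : ∀ e : Fin m → ℕ,
      (List.ofFn fun j => (g j : G) ^ e j).prod⁻¹ * x ∈ ⁅H, H⁆ ↔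
        Abelianization.of ⟨x, hx⟩ = ∏ j, Abelianization.of (g j) ^ e j := by
    intro e
    have hw : ((List.ofFn fun j => g j ^ e j).prod : G) =
        (List.ofFn fun j => (g j : G) ^ e j).prod := by
      simp [List.map_ofFn, Function.comp_def]
    rw [← hw, ← H.coe_inv, ← H.coe_mul (y := ⟨x, hx⟩),
      ← Abelianization.of_eq_one_iff_mem_commutator, map_mul, map_inv, inv_mul_eq_one,
      map_list_prod, List.map_ofFn, List.prod_ofFn, eq_comm]
    simp only [Function.comp_def, map_pow]
  simp only [hcoset]
  exact CommGroup.existsUnique_pow_lt_orderOf_eq_prod hg hbij _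

theorem list_prod_ofFn_mem_of_antitone {G : Type*} [Group G] {H : ℕ → Subgroup G}
    (hH : Antitone H) {s : ℕ} (y : Fin s → G) (hy : ∀ i : Fin s, y i ∈ H i) :
    (List.ofFn y).prod ∈ H 0 :=
  Subgroup.list_prod_mem _ fun z hz => by
    obtain ⟨i, rfl⟩ := List.mem_ofFn.mp hz
    exact hH (Nat.zero_le _) (hy i)

theorem existsUnique_eq_prod_ofFn_of_existsUnique_inv_mul_mem {G : Type*} [Group G] {s : ℕ}
    {H : ℕ → Subgroup G} (hH : Antitone H) (hbot : H s = ⊥) {E : Fin s → Type*}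
    {P : ∀ i, E i → Prop} {w : ∀ i, E i → G} (hw : ∀ (i : Fin s) e, w i e ∈ H i)
    (hstep : ∀ i : Fin s, ∀ x ∈ H i, ∃! e, P i e ∧ (w i e)⁻¹ * x ∈ H (i + 1))
    {x : G} (hx : x ∈ H 0) :
    ∃! δ : ∀ i, E i, (∀ i, P i (δ i)) ∧ x = (List.ofFn fun i => w i (δ i)).prod := by
  induction s generalizing H x with
  | zero =>
    rw [hbot, Subgroup.mem_bot] at hx
    exact ⟨finZeroElim, ⟨finZeroElim, by simp [hx]⟩, fun _ _ => funext finZeroElim⟩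
  | succ s ih =>
    have hH' : Antitone fun k => H (k + 1) := fun _ _ h => hH (by omega)
    obtain ⟨e, ⟨he, hex⟩, he_unique⟩ := hstep 0 x hx
    obtain ⟨δ, ⟨hδ, hδx⟩, hδ_unique⟩ :=
      ih hH' hbot (fun i => hw i.succ) (fun i => hstep i.succ) hex
    refine ⟨Fin.cons e δ, ⟨Fin.cases he hδ, ?_⟩, fun δ' ⟨hδ', hδ'x⟩ => ?_⟩
    · simp [List.ofFn_succ, ← hδx]
    have htail_mem : (List.ofFn fun i => w i.succ (δ' i.succ)).prod ∈ H 1 :=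
      list_prod_ofFn_mem_of_antitone hH' _ fun i => hw i.succ _
    rw [List.ofFn_succ, List.prod_cons] at hδ'x
    have h0 : δ' 0 = e :=
      he_unique _ ⟨hδ' 0, by rw [hδ'x, inv_mul_cancel_left]; exact htail_mem⟩
    have htail : Fin.tail δ' = δ := hδ_unique _ ⟨fun i => hδ' i.succ, by
      rw [hδ'x, h0, inv_mul_cancel_left]; rfl⟩
    rw [← Fin.cons_self_tail δ', h0, htail]

/-- The abelian quotient `G^(i)/G^(i+1)` is formalized as the abelianization of the
subgroup `derivedSeries G i` (note `derivedSeries G 0 = G`, matching `G^(1) = G`). -/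
theorem stmt_15 {G : Type*} [Group G] [Finite G] (s : ℕ)
    (hsol : derivedSeries G s = ⊥)
    (mm : Fin s → ℕ) (gg : (i : Fin s) → Fin (mm i) → G)
    (hmem : ∀ (i : Fin s) (j : Fin (mm i)), gg i j ∈ derivedSeries G i)
    (hds : ∀ i : Fin s, Function.Bijective
      (fun f : (∀ j : Fin (mm i), Subgroup.zpowers
          (Abelianization.of (⟨gg i j, hmem i j⟩ : ↥(derivedSeries G i)))) =>
        ∏ j, (f j : Abelianization ↥(derivedSeries G i)))) :
    ∀ x : G, ∃! δ : (i : Fin s) → Fin (mm i) → ℕ,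
      (∀ (i : Fin s) (j : Fin (mm i)),
        δ i j < orderOf (Abelianization.of
          (⟨gg i j, hmem i j⟩ : ↥(derivedSeries G i)))) ∧
      x = (List.ofFn fun i : Fin s =>
        (List.ofFn fun j : Fin (mm i) => gg i j ^ δ i j).prod).prod := by
  intro x
  exact existsUnique_eq_prod_ofFn_of_existsUnique_inv_mul_mem (derivedSeries_antitone G) hsol
    (fun i e => Subgroup.list_prod_mem _ fun z hz => by
      obtain ⟨j, rfl⟩ := List.mem_ofFn.mp hz
      exact pow_mem (hmem i j) _)
    (fun i y hy => derivedSeries_succ G i ▸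
      (derivedSeries G i).existsUnique_pow_lt_orderOf_inv_mul_mem_commutator
        (fun _ => isOfFinOrder_of_finite _) (hds i) hy)
    (derivedSeries_zero G ▸ Subgroup.mem_top x)
end
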